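/- Let k ∈ {1,…,n}, Q_0 = [0,1]^n, m ∈ ℕ, ε > 0 and K > 0. Suppose F, G ∈ C²(Q_0) satisfy | ∫_Q ( C_k(∇²F(x)) − C_k(∇²G(x)) ) dx | ≤ ε |Q| for every Q ∈ 𝒬(m), and ∫_{Q_0} ( C_k(∇²F(x)) + C_k(∇²G(x)) ) dx ≤ 2K. Then for every φ ∈ C¹(Q_0), | ∫_{Q_0} ( C_k(∇²F(x)) − C_k(∇²G(x)) ) φ(x) dx | ≤ ε ‖φ‖_∞ + 2K (√n / m) ‖∇φ‖_∞. -/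

import Mathlib

open MeasureTheory Filter Topology Metric Set
open scoped RealInnerProductSpace ENNReal

noncomputable section

/-- Euclidean `n`-space. -/
abbrev Euc (n : ℕ) := EuclideanSpace ℝ (Fin n)

/-- Operator (spectral) norm of an `n × n` real matrix, i.e. the norm of the induced
linear map on Euclidean space. -/
def matOpNorm {n : ℕ} (A : Matrix (Fin n) (Fin n) ℝ) : ℝ :=
  ‖LinearMap.toContinuousLinearMap (Matrix.toEuclideanLin A)‖

/-- The singular values of a real square matrix: the eigenvalues of `√(Aᵀ A)`
(equivalently, the square roots of the eigenvalues of `Aᵀ A = Aᴴ A`), in some order. -/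
def singularValues {n : ℕ} (A : Matrix (Fin n) (Fin n) ℝ) : Fin n → ℝ :=
  fun i => Real.sqrt ((Matrix.isHermitian_iff_isSymm.mpr (Matrix.isSymm_transpose_mul_self A)).eigenvalues i)

/-- `k`-th elementary symmetric function of `n` numbers. -/
def Sk {n : ℕ} (k : ℕ) (μ : Fin n → ℝ) : ℝ :=
  ∑ s ∈ Finset.powersetCard k Finset.univ, ∏ i ∈ s, μ i

/-- `C_k(A)`: the `k`-th elementary symmetric function of the singular values of `A`. -/
def Ck {n : ℕ} (k : ℕ) (A : Matrix (Fin n) (Fin n) ℝ) : ℝ :=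
  Sk k (singularValues A)

/-- The Hessian matrix of a function `g : ℝⁿ → ℝ` at `x`. -/
def hess {n : ℕ} (g : Euc n → ℝ) (x : Euc n) : Matrix (Fin n) (Fin n) ℝ :=
  Matrix.of fun i j =>
    fderiv ℝ (fun y => fderiv ℝ g y (EuclideanSpace.single j 1)) x (EuclideanSpace.single i 1)

/-- The Jacobian matrix of a map `h : ℝⁿ → ℝⁿ` at `x`. -/
def jac {n : ℕ} (h : Euc n → Euc n) (x : Euc n) : Matrix (Fin n) (Fin n) ℝ :=
  Matrix.of fun i j => fderiv ℝ h x (EuclideanSpace.single j 1) i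

/-- The closed cube with "lower--left" corner `a` and side length `r`. -/
def cube {n : ℕ} (a : Euc n) (r : ℝ) : Set (Euc n) := {x | ∀ i, x i ∈ Icc (a i) (a i + r)}

/-- The open unit cube `(0,1)ⁿ`. -/
def openUnitCube (n : ℕ) : Set (Euc n) := {x | ∀ i, x i ∈ Ioo (0:ℝ) 1}

/-- The closed unit cube `Q₀ = [0,1]ⁿ`. -/
def closedUnitCube (n : ℕ) : Set (Euc n) := {x | ∀ i, x i ∈ Icc (0:ℝ) 1}

/-- The closed subcube of side `1/m` of `[0,1]ⁿ` indexed by `z ∈ {0,…,m-1}ⁿ`;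
these cubes form the partition `𝒬(m)`. -/
def gridCube {n : ℕ} (m : ℕ) (z : Fin n → ℕ) : Set (Euc n) :=
  {x | ∀ i, x i ∈ Icc ((z i : ℝ) / m) (((z i : ℝ) + 1) / m)}

/-- `p` as an extended nonnegative real exponent. -/
def pExp (p : ℝ) : ℝ≥0∞ := ENNReal.ofReal p

/-- The conjugate exponent `p'` of `p ∈ [1, ∞)`, as an extended nonnegative real. -/
def dualExp (p : ℝ) : ℝ≥0∞ := if p = 1 then ⊤ else ENNReal.ofReal (p / (p - 1))

/-- Test functions on `Ω`: smooth compactly supported functions with support inside `Ω`. -/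
def IsTestFun {n : ℕ} (Ω : Set (Euc n)) (φ : Euc n → ℝ) : Prop :=
  ContDiff ℝ (⊤ : ℕ∞) φ ∧ HasCompactSupport φ ∧ tsupport φ ⊆ Ω

/-- `v` is the `i`-th weak (distributional) partial derivative of `u` on `Ω`. -/
def HasWeakPDeriv {n : ℕ} (Ω : Set (Euc n)) (i : Fin n) (u v : Euc n → ℝ) : Prop :=
  ∀ φ : Euc n → ℝ, IsTestFun Ω φ →
    ∫ x in Ω, u x * fderiv ℝ φ x (EuclideanSpace.single i 1) = - ∫ x in Ω, v x * φ x

/-- `u ∈ W^{2,p}(Ω)`, with weak gradient `Du` and weak Hessian `D2u`. -/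
def MemW2p {n : ℕ} (Ω : Set (Euc n)) (p : ℝ) (u : Euc n → ℝ)
    (Du : Euc n → Fin n → ℝ) (D2u : Euc n → Matrix (Fin n) (Fin n) ℝ) : Prop :=
  MemLp u (pExp p) (volume.restrict Ω) ∧
  (∀ i, MemLp (fun x => Du x i) (pExp p) (volume.restrict Ω)) ∧
  (∀ i j, MemLp (fun x => D2u x i j) (pExp p) (volume.restrict Ω)) ∧
  (∀ i, HasWeakPDeriv Ω i u (fun x => Du x i)) ∧
  (∀ i j, HasWeakPDeriv Ω j (fun x => Du x i) (fun x => D2u x i j))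

/-- The `W^{2,p}(Ω)`-norm of `u` (expressed through its weak gradient and Hessian). -/
def W2pNorm {n : ℕ} (Ω : Set (Euc n)) (p : ℝ) (u : Euc n → ℝ)
    (Du : Euc n → Fin n → ℝ) (D2u : Euc n → Matrix (Fin n) (Fin n) ℝ) : ℝ :=
  (eLpNorm u (pExp p) (volume.restrict Ω)).toReal +
  (∑ i, (eLpNorm (fun x => Du x i) (pExp p) (volume.restrict Ω)).toReal) +
  (∑ i, ∑ j, (eLpNorm (fun x => D2u x i j) (pExp p) (volume.restrict Ω)).toReal)

/-- Weak convergence `u_j ⇀ v` in `W^{2,p}(Ω)`: boundedness in norm together with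
convergence of `u_j`, `Du_j`, `D²u_j` tested against arbitrary `L^{p'}` functions. -/
def WeakW2pTendsto {n : ℕ} (Ω : Set (Euc n)) (p : ℝ)
    (u : ℕ → Euc n → ℝ) (Du : ℕ → Euc n → Fin n → ℝ)
    (D2u : ℕ → Euc n → Matrix (Fin n) (Fin n) ℝ)
    (v : Euc n → ℝ) (Dv : Euc n → Fin n → ℝ)
    (D2v : Euc n → Matrix (Fin n) (Fin n) ℝ) : Prop :=
  (∃ M : ℝ, ∀ j, W2pNorm Ω p (u j) (Du j) (D2u j) ≤ M) ∧
  (∀ g : Euc n → ℝ, MemLp g (dualExp p) (volume.restrict Ω) →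
    Tendsto (fun j => ∫ x in Ω, u j x * g x) atTop (𝓝 (∫ x in Ω, v x * g x)) ∧
    (∀ i, Tendsto (fun j => ∫ x in Ω, Du j x i * g x) atTop
      (𝓝 (∫ x in Ω, Dv x i * g x))) ∧
    (∀ i l, Tendsto (fun j => ∫ x in Ω, D2u j x i l * g x) atTop
      (𝓝 (∫ x in Ω, D2v x i l * g x))))

/-- `u ∈ W^{1,p}(Ω, ℝⁿ)`, with weak Jacobian matrix `Du`. -/
def MemW1pMap {n : ℕ} (Ω : Set (Euc n)) (p : ℝ) (u : Euc n → Euc n)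
    (Du : Euc n → Matrix (Fin n) (Fin n) ℝ) : Prop :=
  (∀ i, MemLp (fun x => u x i) (pExp p) (volume.restrict Ω)) ∧
  (∀ i j, MemLp (fun x => Du x i j) (pExp p) (volume.restrict Ω)) ∧
  (∀ i j, HasWeakPDeriv Ω j (fun x => u x i) (fun x => Du x i j))

/-- The `W^{1,p}(Ω,ℝⁿ)`-norm of a map `u` with weak Jacobian `Du`. -/
def W1pNorm {n : ℕ} (Ω : Set (Euc n)) (p : ℝ) (u : Euc n → Euc n)
    (Du : Euc n → Matrix (Fin n) (Fin n) ℝ) : ℝ :=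
  (∑ i, (eLpNorm (fun x => u x i) (pExp p) (volume.restrict Ω)).toReal) +
  (∑ i, ∑ j, (eLpNorm (fun x => Du x i j) (pExp p) (volume.restrict Ω)).toReal)

/-- Weak convergence `u_j ⇀ v` in `W^{1,p}(Ω,ℝⁿ)`. -/
def WeakW1pTendsto {n : ℕ} (Ω : Set (Euc n)) (p : ℝ)
    (u : ℕ → Euc n → Euc n) (Du : ℕ → Euc n → Matrix (Fin n) (Fin n) ℝ)
    (v : Euc n → Euc n) (Dv : Euc n → Matrix (Fin n) (Fin n) ℝ) : Prop :=
  (∃ M : ℝ, ∀ j, W1pNorm Ω p (u j) (Du j) ≤ M) ∧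
  (∀ g : Euc n → ℝ, MemLp g (dualExp p) (volume.restrict Ω) →
    (∀ i, Tendsto (fun j => ∫ x in Ω, u j x i * g x) atTop
      (𝓝 (∫ x in Ω, v x i * g x))) ∧
    (∀ i l, Tendsto (fun j => ∫ x in Ω, Du j x i l * g x) atTop
      (𝓝 (∫ x in Ω, Dv x i l * g x))))

/-- `Ω` is a bounded open set with Lipschitz boundary: near every boundary point,
after choosing a unit direction `v`, the set `Ω` is the open region above the graph of a
Lipschitz function on the hyperplane orthogonal to `v`. -/
def IsLipschitzDomain {n : ℕ} (Ω : Set (Euc n)) : Prop :=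
  IsOpen Ω ∧ Bornology.IsBounded Ω ∧
  ∀ x ∈ frontier Ω, ∃ v : Euc n, ‖v‖ = 1 ∧ ∃ r > (0:ℝ), ∃ L : NNReal, ∃ φ : Euc n → ℝ,
    LipschitzWith L φ ∧
    ∀ y ∈ Metric.ball x r, (y ∈ Ω ↔ φ (y - (inner ℝ y v : ℝ) • v) < (inner ℝ y v : ℝ))

/-- The `α`-Hölder seminorm of `G` on the set `S`. -/
def holderSemi {n : ℕ} {F : Type*} [NormedAddCommGroup F] (α : ℝ) (S : Set (Euc n))
    (G : Euc n → F) : ℝ :=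
  sSup {c | ∃ x ∈ S, ∃ y ∈ S, x ≠ y ∧ c = ‖G y - G x‖ / dist y x ^ α}

/-- The sup-norm of `f` on the set `S`. -/
def supNorm {n : ℕ} {F : Type*} [NormedAddCommGroup F] (S : Set (Euc n)) (f : Euc n → F) : ℝ :=
  sSup ((fun x => ‖f x‖) '' S)

/-- The `C^{1,α}(S)` norm of a function `u` whose (extended) derivative is `G`. -/
def C1AlphaNorm {n : ℕ} (α : ℝ) (S : Set (Euc n)) (u : Euc n → ℝ)
    (G : Euc n → Euc n →L[ℝ] ℝ) : ℝ :=
  supNorm S u + supNorm S G + holderSemi α S G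

/-- The `C^{0,α}(S)` norm of a map `u`. -/
def C0AlphaNorm {n : ℕ} {F : Type*} [NormedAddCommGroup F] (α : ℝ) (S : Set (Euc n))
    (u : Euc n → F) : ℝ :=
  supNorm S u + holderSemi α S u

/-- `u` belongs to the little Hölder space `c^{1,α}` on `S = closure U`: `u` is differentiable
on the open set `U` with derivative `G`, `u` and `G` extend continuously to `S`, and the
`α`-Hölder modulus of continuity `ω(G, r^α)` of `G` tends to `0` as `r → 0`. -/
def MemLittleHolderC1 {n : ℕ} (α : ℝ) (U S : Set (Euc n)) (u : Euc n → ℝ)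
    (G : Euc n → Euc n →L[ℝ] ℝ) : Prop :=
  (∀ x ∈ U, HasFDerivAt u (G x) x) ∧
  ContinuousOn u S ∧ ContinuousOn G S ∧
  (∀ ε > (0:ℝ), ∃ δ > (0:ℝ), ∀ x ∈ S, ∀ y ∈ S, dist y x < δ →
    ‖G y - G x‖ ≤ ε * dist y x ^ α)

/-- `u` belongs to the little Hölder space `c^{0,α}(S)`. -/
def MemLittleHolderC0 {n : ℕ} {F : Type*} [NormedAddCommGroup F] (α : ℝ) (S : Set (Euc n))
    (u : Euc n → F) : Prop :=
  ContinuousOn u S ∧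
  (∀ ε > (0:ℝ), ∃ δ > (0:ℝ), ∀ x ∈ S, ∀ y ∈ S, dist y x < δ →
    ‖u y - u x‖ ≤ ε * dist y x ^ α)

/-- The modulus of continuity `ω(G, t) = sup {‖G y - G x‖ : x, y ∈ S, |y - x| ≤ t}`. -/
def modCont {n : ℕ} {F : Type*} [NormedAddCommGroup F] (S : Set (Euc n)) (G : Euc n → F)
    (t : ℝ) : ℝ :=
  sSup {c | ∃ x ∈ S, ∃ y ∈ S, dist y x ≤ t ∧ c = ‖G y - G x‖}

/-!
On a grid cube `Q` of side `1/m`, replace `φ` by its value at a corner `c` of `Q`: by the mean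
value theorem `|φ - φ c| ≤ ‖∇φ‖_∞ √n / m` on `Q`, and `|C_k(∇²F) - C_k(∇²G)| ≤ C_k(∇²F) + C_k(∇²G)`
because singular values are nonnegative. The constant part contributes at most `ε |Q| ‖φ‖_∞`,
the remainder at most `(√n / m) ‖∇φ‖_∞ ∫_Q (C_k(∇²F) + C_k(∇²G))`; sum over the cubes.

The integrands are continuous on the compact cube, hence integrable, because `A ↦ C_k(A)` is
continuous: for `k ≤ n`, `C_k(A)` is the coefficient of `X^(n-k)` in the characteristic polynomial
of `-√(AᵀA)`, which depends continuously on `A` by continuity of the functional calculus.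
-/

open scoped Matrix

theorem Matrix.continuous_charpoly_coeff {ι R : Type*} [Fintype ι] [DecidableEq ι] [CommRing R]
    [TopologicalSpace R] [IsTopologicalRing R] (i : ℕ) :
    Continuous fun B : Matrix ι ι R => B.charpoly.coeff i := by
  have h (B : Matrix ι ι R) : B.charpoly.coeff i =
      MvPolynomial.eval (fun p : ι × ι => B p.1 p.2) ((Matrix.charpoly.univ R ι).coeff i) := by
    have := Matrix.charpoly.univ_coeff_eval₂Hom ι (RingHom.id R) (fun p => B p.1 p.2) i
    rw [show Matrix.of (Function.curry fun p : ι × ι => B p.1 p.2) = B from rfl] at this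
    exact this.symm
  simp_rw [h]
  exact (MvPolynomial.continuous_eval _).comp (by fun_prop)

theorem Ck_eq_charpoly_coeff {n k : ℕ} (hk : k ≤ n) (A : Matrix (Fin n) (Fin n) ℝ) :
    Ck k A = (cfc (fun t => -√t) (Aᵀ * A)).charpoly.coeff (n - k) := by
  have hA := Matrix.isHermitian_iff_isSymm.mpr (Matrix.isSymm_transpose_mul_self A)
  simp only [hA.charpoly_cfc_eq, map_neg, sub_neg_eq_add]
  rw [Finset.prod_X_add_C_coeff _ _ (by simp), Finset.card_univ, Fintype.card_fin,
    Nat.sub_sub_self hk]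
  rfl

theorem Ck_eq_zero_of_lt {n k : ℕ} (hk : n < k) (A : Matrix (Fin n) (Fin n) ℝ) : Ck k A = 0 := by
  rw [Ck, Sk, Finset.powersetCard_eq_empty.mpr (by simpa using hk), Finset.sum_empty]

open scoped Matrix.Norms.L2Operator in
theorem continuous_Ck (n k : ℕ) : Continuous (Ck k : Matrix (Fin n) (Fin n) ℝ → ℝ) := by
  rcases le_or_gt k n with hk | hk
  · simp_rw [funext (Ck_eq_charpoly_coeff hk)]
    refine (Matrix.continuous_charpoly_coeff _).comp ?_
    exact Continuous.cfc_of_mem_nhdsSet _ Filter.univ_mem (by fun_prop) fun A =>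
      (Matrix.isHermitian_iff_isSymm.mpr (Matrix.isSymm_transpose_mul_self A)).isSelfAdjoint
  · simp_rw [funext (Ck_eq_zero_of_lt hk)]
    exact continuous_const

theorem Ck_nonneg {n : ℕ} (k : ℕ) (A : Matrix (Fin n) (Fin n) ℝ) : 0 ≤ Ck k A := by
  rw [Ck, Sk]
  exact Finset.sum_nonneg fun _ _ => Finset.prod_nonneg fun _ _ => Real.sqrt_nonneg _

theorem abs_Ck_sub_Ck_le {n : ℕ} (k : ℕ) (A B : Matrix (Fin n) (Fin n) ℝ) :
    |Ck k A - Ck k B| ≤ Ck k A + Ck k B := by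
  simpa only [abs_of_nonneg (Ck_nonneg k _)] using abs_sub (Ck k A) (Ck k B)

theorem continuous_hess {n : ℕ} {F : Euc n → ℝ} (hF : ContDiff ℝ 2 F) : Continuous (hess F) := by
  refine continuous_matrix fun i j => ?_
  have hFj : ContDiff ℝ 1 fun y => fderiv ℝ F y (EuclideanSpace.single j 1) :=
    (hF.fderiv_right (by norm_num)).clm_apply contDiff_const
  exact (hFj.continuous_fderiv one_ne_zero).clm_apply continuous_const

section GridCube

variable {n : ℕ}

theorem gridCube_eq_preimage (m : ℕ) (z : Fin n → ℕ) :
    gridCube m z = WithLp.ofLp ⁻¹' univ.pi fun i => Icc ((z i : ℝ) / m) ((z i + 1) / m) := by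
  ext x
  simp only [gridCube, mem_preimage, mem_univ_pi]
  rfl

theorem closedUnitCube_eq_gridCube : closedUnitCube n = gridCube 1 0 := by
  ext x
  simp [closedUnitCube, gridCube]

theorem gridCube_subset_closedUnitCube {m : ℕ} (z : Fin n → Fin m) :
    gridCube m (fun i => z i) ⊆ closedUnitCube n := fun _ hx i =>
  ⟨(div_nonneg (Nat.cast_nonneg _) (Nat.cast_nonneg _)).trans (hx i).1,
    (hx i).2.trans (div_le_one_of_le₀ (by exact_mod_cast (z i).isLt) (Nat.cast_nonneg m))⟩

theorem measurableSet_gridCube (m : ℕ) (z : Fin n → ℕ) : MeasurableSet (gridCube m z) := by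
  rw [gridCube_eq_preimage]
  exact (PiLp.volume_preserving_ofLp _).measurable (.univ_pi fun _ => measurableSet_Icc)

theorem isCompact_gridCube (m : ℕ) (z : Fin n → ℕ) : IsCompact (gridCube m z) := by
  rw [gridCube_eq_preimage]
  exact (PiLp.homeomorph 2 (fun _ : Fin n => ℝ)).isCompact_preimage.mpr
    (isCompact_univ_pi fun _ => isCompact_Icc)

theorem convex_gridCube (m : ℕ) (z : Fin n → ℕ) : Convex ℝ (gridCube m z) := by
  rw [gridCube_eq_preimage]
  exact (convex_pi fun _ _ => convex_Icc _ _).linear_preimage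
    (WithLp.linearEquiv 2 ℝ _).toLinearMap

theorem volume_gridCube_eq_prod (m : ℕ) (z : Fin n → ℕ) :
    volume (gridCube m z) = ∏ i, volume (Icc ((z i : ℝ) / m) ((z i + 1) / m)) := by
  rw [gridCube_eq_preimage, (PiLp.volume_preserving_ofLp _).measure_preimage
    (MeasurableSet.univ_pi fun _ => measurableSet_Icc).nullMeasurableSet, volume_pi_pi]

theorem volume_closedUnitCube : volume (closedUnitCube n) = 1 := by
  simp [closedUnitCube_eq_gridCube, volume_gridCube_eq_prod]

theorem aedisjoint_gridCube {m : ℕ} {z z' : Fin n → ℕ} (hzz' : z ≠ z') :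
    AEDisjoint volume (gridCube m z) (gridCube m z') := by
  obtain ⟨i, hi⟩ := Function.ne_iff.mp hzz'
  rw [AEDisjoint, gridCube_eq_preimage, gridCube_eq_preimage, ← preimage_inter, ← pi_inter_distrib,
    (PiLp.volume_preserving_ofLp _).measure_preimage
      (MeasurableSet.univ_pi fun _ => measurableSet_Icc.inter measurableSet_Icc).nullMeasurableSet,
    volume_pi_pi]
  refine Finset.prod_eq_zero (Finset.mem_univ i) ?_
  rw [Icc_inter_Icc, Real.volume_Icc, ENNReal.ofReal_eq_zero, sub_nonpos]
  rcases hi.lt_or_gt with h | h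
  · refine (min_le_left _ _).trans (le_trans ?_ (le_max_right _ _))
    gcongr
    exact_mod_cast h
  · refine (min_le_right _ _).trans (le_trans ?_ (le_max_left _ _))
    gcongr
    exact_mod_cast h

theorem exists_lt_mem_Icc_div {m : ℕ} (hm : 0 < m) {t : ℝ} (ht : t ∈ Icc (0 : ℝ) 1) :
    ∃ j < m, t ∈ Icc ((j : ℝ) / m) ((j + 1) / m) := by
  have hm' : (0 : ℝ) < m := by exact_mod_cast hm
  rcases ht.2.lt_or_eq with ht1 | rfl
  · refine ⟨⌊t * m⌋₊, (Nat.floor_lt (by nlinarith [ht.1])).mpr (by nlinarith), ?_, ?_⟩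
    · rw [div_le_iff₀ hm']
      exact Nat.floor_le (by nlinarith [ht.1])
    · rw [le_div_iff₀ hm']
      exact (Nat.lt_floor_add_one _).le
  · refine ⟨m - 1, Nat.sub_lt hm one_pos, ?_, ?_⟩ <;>
      rw [Nat.cast_pred hm] <;> field_simp <;> linarith

theorem iUnion_gridCube {m : ℕ} (hm : 0 < m) :
    ⋃ z : Fin n → Fin m, gridCube m (fun i => z i) = closedUnitCube n := by
  refine (iUnion_subset gridCube_subset_closedUnitCube).antisymm fun x hx => ?_
  choose j hj hxj using fun i => exists_lt_mem_Icc_div hm (hx i)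
  exact mem_iUnion.mpr ⟨fun i => ⟨j i, hj i⟩, hxj⟩

theorem dist_le_of_mem_gridCube {m : ℕ} {z : Fin n → ℕ} {x y : Euc n}
    (hx : x ∈ gridCube m z) (hy : y ∈ gridCube m z) : dist x y ≤ √n / m := by
  have hcoord (i : Fin n) : dist (x i) (y i) ≤ 1 / m := by
    have hwidth : ((z i : ℝ) + 1) / m - z i / m = 1 / m := by ring
    rw [Real.dist_eq, abs_sub_le_iff]
    constructor <;> linarith [(hx i).1, (hx i).2, (hy i).1, (hy i).2]
  calc dist x y = √(∑ i, dist (x i) (y i) ^ 2) := EuclideanSpace.dist_eq x y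
    _ ≤ √(∑ _i : Fin n, (1 / m : ℝ) ^ 2) := by gcongr with i; exact hcoord i
    _ = √n / m := by simp [Real.sqrt_mul, div_eq_mul_inv]

theorem toLp_div_mem_gridCube (m : ℕ) (z : Fin n → ℕ) :
    WithLp.toLp 2 (fun i => (z i : ℝ) / m) ∈ gridCube m z :=
  fun _ => ⟨le_rfl, div_le_div_of_nonneg_right (le_add_of_nonneg_right zero_le_one)
    m.cast_nonneg⟩

theorem abs_sub_le_of_mem_gridCube {m : ℕ} {z : Fin n → ℕ} {φ : Euc n → ℝ}
    (hφ : Differentiable ℝ φ) {L : ℝ} (hL : ∀ x ∈ gridCube m z, ‖fderiv ℝ φ x‖ ≤ L)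
    {x y : Euc n} (hx : x ∈ gridCube m z) (hy : y ∈ gridCube m z) :
    |φ x - φ y| ≤ L * (√n / m) := by
  have hL0 : 0 ≤ L := (norm_nonneg _).trans (hL x hx)
  calc |φ x - φ y| ≤ L * ‖x - y‖ :=
        (convex_gridCube m z).norm_image_sub_le_of_norm_fderiv_le (fun x _ => hφ x) hL hy hx
    _ ≤ L * (√n / m) := by
      rw [← dist_eq_norm]
      exact mul_le_mul_of_nonneg_left (dist_le_of_mem_gridCube hx hy) hL0

end GridCube

section Testing

open Function

variable {X : Type*} [MeasurableSpace X] {μ : Measure X} {h w φ : X → ℝ} {δ : ℝ}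

theorem abs_setIntegral_mul_le {Q : Set X} (hQ : MeasurableSet Q) (hh : IntegrableOn h Q μ)
    (hw : IntegrableOn w Q μ) (hhφ : IntegrableOn (fun x => h x * φ x) Q μ)
    (hhw : ∀ x ∈ Q, |h x| ≤ w x) {c : X} (hosc : ∀ x ∈ Q, |φ x - φ c| ≤ δ) :
    |∫ x in Q, h x * φ x ∂μ| ≤ |∫ x in Q, h x ∂μ| * |φ c| + δ * ∫ x in Q, w x ∂μ := by
  have hsplit : ∫ x in Q, h x * φ x ∂μ =
      (∫ x in Q, h x ∂μ) * φ c + ∫ x in Q, h x * (φ x - φ c) ∂μ := by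
    simp_rw [mul_sub]
    rw [integral_sub hhφ (hh.mul_const _), integral_mul_const]
    ring
  have hrest : |∫ x in Q, h x * (φ x - φ c) ∂μ| ≤ δ * ∫ x in Q, w x ∂μ := by
    rw [← integral_const_mul, ← Real.norm_eq_abs]
    refine norm_integral_le_of_norm_le (hw.const_mul δ)
      (ae_restrict_of_forall_mem hQ fun x hx => ?_)
    rw [Real.norm_eq_abs, abs_mul, mul_comm δ]
    exact mul_le_mul (hhw x hx) (hosc x hx) (abs_nonneg _) ((abs_nonneg _).trans (hhw x hx))
  calc |∫ x in Q, h x * φ x ∂μ|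
      ≤ |(∫ x in Q, h x ∂μ) * φ c| + |∫ x in Q, h x * (φ x - φ c) ∂μ| := by
        rw [hsplit]; exact abs_add_le _ _
    _ ≤ |∫ x in Q, h x ∂μ| * |φ c| + δ * ∫ x in Q, w x ∂μ := by rw [abs_mul]; gcongr

theorem abs_integral_mul_le_of_iUnion_eq {ι : Type*} [Fintype ι] {Q : ι → Set X} {S : Set X}
    (hQS : ⋃ i, Q i = S) (hQm : ∀ i, MeasurableSet (Q i)) (hQd : Pairwise (AEDisjoint μ on Q))
    (hfin : μ S ≠ ∞) (hh : IntegrableOn h S μ) (hw : IntegrableOn w S μ)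
    (hhφ : IntegrableOn (fun x => h x * φ x) S μ) (hhw : ∀ x ∈ S, |h x| ≤ w x) {ε M : ℝ}
    (hε : ∀ i, |∫ x in Q i, h x ∂μ| ≤ ε * μ.real (Q i)) {c : ι → X} (hM : ∀ i, |φ (c i)| ≤ M)
    (hosc : ∀ i, ∀ x ∈ Q i, |φ x - φ (c i)| ≤ δ) :
    |∫ x in S, h x * φ x ∂μ| ≤ ε * M * μ.real S + δ * ∫ x in S, w x ∂μ := by
  subst hQS
  have hQ0 (i : ι) : NullMeasurableSet (Q i) μ := (hQm i).nullMeasurableSet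
  have hvol : μ.real (⋃ i, Q i) = ∑ i, μ.real (Q i) := by
    simp_rw [measureReal_def, measure_iUnion₀ hQd hQ0, tsum_fintype]
    exact ENNReal.toReal_sum fun i _ => measure_ne_top_of_subset (subset_iUnion Q i) hfin
  rw [integral_iUnion_ae hQ0 hQd hhφ, integral_iUnion_ae hQ0 hQd hw, tsum_fintype, tsum_fintype,
    hvol, Finset.mul_sum, Finset.mul_sum, ← Finset.sum_add_distrib]
  refine (Finset.abs_sum_le_sum_abs _ _).trans (Finset.sum_le_sum fun i _ => ?_)
  have hQi : Q i ⊆ ⋃ i, Q i := subset_iUnion Q i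
  refine (abs_setIntegral_mul_le (hQm i) (hh.mono_set hQi) (hw.mono_set hQi) (hhφ.mono_set hQi)
    (fun x hx => hhw x (hQi hx)) (hosc i)).trans ?_
  rw [mul_right_comm ε M]
  gcongr
  · exact (abs_nonneg _).trans (hε i)
  · exact hε i
  · exact hM i

end Testing

theorem cube_estimate_tested_against_C1_general
    (n k : ℕ) (m : ℕ) (hm : 0 < m)
    (ε K : ℝ)
    (F G : Euc n → ℝ) (hF : ContDiff ℝ 2 F) (hG : ContDiff ℝ 2 G)
    (hcube : ∀ z : Fin n → ℕ, (∀ i, z i < m) →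
      |∫ x in gridCube m z, (Ck k (hess F x) - Ck k (hess G x))| ≤
        ε * (volume (gridCube m z)).toReal)
    (hbound : (∫ x in closedUnitCube n, (Ck k (hess F x) + Ck k (hess G x))) ≤ 2 * K)
    (φ : Euc n → ℝ) (hφ : ContDiff ℝ 1 φ) :
    |∫ x in closedUnitCube n, (Ck k (hess F x) - Ck k (hess G x)) * φ x| ≤
      ε * sSup ((fun x => |φ x|) '' closedUnitCube n) +
      2 * K * (Real.sqrt n / m) *
        sSup ((fun x => ‖fderiv ℝ φ x‖) '' closedUnitCube n) := by
  set S₁ := sSup ((fun x => |φ x|) '' closedUnitCube n)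
  set S₂ := sSup ((fun x => ‖fderiv ℝ φ x‖) '' closedUnitCube n)
  have hQ₀ : IsCompact (closedUnitCube n) := closedUnitCube_eq_gridCube ▸ isCompact_gridCube 1 0
  have hS₁ (x) (hx : x ∈ closedUnitCube n) : |φ x| ≤ S₁ :=
    le_csSup (hQ₀.bddAbove_image hφ.continuous.abs.continuousOn) (mem_image_of_mem _ hx)
  have hS₂ (x) (hx : x ∈ closedUnitCube n) : ‖fderiv ℝ φ x‖ ≤ S₂ :=
    le_csSup (hQ₀.bddAbove_image (hφ.continuous_fderiv one_ne_zero).norm.continuousOn)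
      (mem_image_of_mem _ hx)
  have hS₂0 : 0 ≤ S₂ :=
    (norm_nonneg _).trans (hS₂ _ (closedUnitCube_eq_gridCube ▸ toLp_div_mem_gridCube 1 0))
  have hf := (continuous_Ck n k).comp (continuous_hess hF)
  have hg := (continuous_Ck n k).comp (continuous_hess hG)
  have key := abs_integral_mul_le_of_iUnion_eq (μ := volume)
    (h := fun x => Ck k (hess F x) - Ck k (hess G x))
    (w := fun x => Ck k (hess F x) + Ck k (hess G x))
    (iUnion_gridCube hm) (fun z => measurableSet_gridCube m _)
    (fun z z' hzz' => aedisjoint_gridCube fun h => hzz' (funext fun i => Fin.ext (congrFun h i)))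
    (by simp [volume_closedUnitCube])
    ((hf.sub hg).continuousOn.integrableOn_compact hQ₀)
    ((hf.add hg).continuousOn.integrableOn_compact hQ₀)
    (((hf.sub hg).mul hφ.continuous).continuousOn.integrableOn_compact hQ₀)
    (fun x _ => abs_Ck_sub_Ck_le k _ _) (fun z => hcube _ fun i => (z i).isLt)
    (fun z => hS₁ _ (gridCube_subset_closedUnitCube z (toLp_div_mem_gridCube m _)))
    (fun z x hx => abs_sub_le_of_mem_gridCube (hφ.differentiable one_ne_zero)
      (fun y hy => hS₂ y (gridCube_subset_closedUnitCube z hy)) hx (toLp_div_mem_gridCube m _))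
  rw [measureReal_def, volume_closedUnitCube, ENNReal.toReal_one, mul_one] at key
  refine key.trans ?_
  calc ε * S₁ + S₂ * (√n / m) * ∫ x in closedUnitCube n, (Ck k (hess F x) + Ck k (hess G x))
      ≤ ε * S₁ + S₂ * (√n / m) * (2 * K) := by gcongr
    _ = ε * S₁ + 2 * K * (√n / m) * S₂ := by ring

/-- (Testing cube-wise estimates against `C¹` functions.) Suppose
`F, G ∈ C²(Q₀)` satisfy `|∫_Q (C_k(∇²F) − C_k(∇²G))| ≤ ε |Q|` for each `Q ∈ 𝒬(m)` and
`∫_{Q₀} (C_k(∇²F) + C_k(∇²G)) ≤ 2K`. Then for every `φ ∈ C¹(Q₀)`,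
`|∫_{Q₀} (C_k(∇²F) − C_k(∇²G)) φ| ≤ ε ‖φ‖_∞ + 2K (√n/m) ‖∇φ‖_∞`. -/
theorem cube_estimate_tested_against_C1
    (n k : ℕ) (hk1 : 1 ≤ k) (hkn : k ≤ n) (m : ℕ) (hm : 0 < m)
    (ε K : ℝ) (hε : 0 < ε) (hK : 0 < K)
    (F G : Euc n → ℝ) (hF : ContDiff ℝ 2 F) (hG : ContDiff ℝ 2 G)
    (hcube : ∀ z : Fin n → ℕ, (∀ i, z i < m) →
      |∫ x in gridCube m z, (Ck k (hess F x) - Ck k (hess G x))| ≤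
        ε * (volume (gridCube m z)).toReal)
    (hbound : (∫ x in closedUnitCube n, (Ck k (hess F x) + Ck k (hess G x))) ≤ 2 * K)
    (φ : Euc n → ℝ) (hφ : ContDiff ℝ 1 φ) :
    |∫ x in closedUnitCube n, (Ck k (hess F x) - Ck k (hess G x)) * φ x| ≤
      ε * sSup ((fun x => |φ x|) '' closedUnitCube n) +
      2 * K * (Real.sqrt n / m) *
        sSup ((fun x => ‖fderiv ℝ φ x‖) '' closedUnitCube n) :=
  cube_estimate_tested_against_C1_general n k m hm ε K F G hF hG hcube hbound φ hφ
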